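/- Let A = (e^2 - 3e + 1)/(e^2 - 2e + 1) and B = 1/12. For every p with A < p < B, there exists a unique x_0 \in (0,1) such that 1/x^2 - e^{-x}/(1 - e^{-x})^2 = p; moreover 1/x^2 - e^{-x}/(1-e^{-x})^2 > p for x \in (0, x_0) and < p for x \in (x_0, 1). -/

import Mathlib

/-!
Since `e^{-x} / (1 - e^{-x})^2 = 1 / (2 sinh (x/2))^2`, the function is
`f x = 1/x^2 - 1/(2 sinh (x/2))^2`. Its derivative at `x = 2t` is negative exactly when
`t^3 cosh t < sinh^3 t`, which for `0 < t ≤ 1` follows from the Taylor bounds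
`t + t^3/6 ≤ sinh t` and `cosh t ≤ 1 + t^2/2 + 5t^4/96`; so `f` is strictly decreasing on `(0, 2]`.
The bound on `sinh` also gives `f x > 1/12 - x^2`, so `f` exceeds `p` near `0`, while
`f 1 = A < p`. The intermediate value theorem and strict monotonicity finish the proof.
-/

open Real Set

lemma self_add_cube_div_six_le_sinh {t : ℝ} (ht : 0 ≤ t) : t + t ^ 3 / 6 ≤ sinh t := by
  have h := sum_le_hasSum (Finset.range 2) (fun n _ => by positivity) (hasSum_sinh t)
  norm_num [Finset.sum_range_succ, Nat.factorial] at h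
  linarith

-- `5 / 96` is the error bound of `Real.exp_bound` for four terms; the odd terms cancel in `cosh`.
lemma cosh_le_of_abs_le_one {t : ℝ} (ht : |t| ≤ 1) :
    cosh t ≤ 1 + t ^ 2 / 2 + 5 * t ^ 4 / 96 := by
  have hp := abs_le.1 (Real.exp_bound ht (n := 4) (by norm_num))
  have hn := abs_le.1 (Real.exp_bound (x := -t) (by rwa [abs_neg]) (n := 4) (by norm_num))
  have ht4 : |t| ^ 4 = t ^ 4 := by rw [pow_abs, abs_of_nonneg (by positivity)]
  rw [abs_neg, ht4] at hn
  rw [ht4] at hp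
  norm_num [Finset.sum_range_succ, Nat.factorial] at hp hn
  rw [cosh_eq]
  linarith [hp.2, hn.2]

lemma cube_mul_cosh_lt_sinh_cube {t : ℝ} (ht : 0 < t) (ht1 : t ≤ 1) :
    t ^ 3 * cosh t < sinh t ^ 3 :=
  calc t ^ 3 * cosh t ≤ t ^ 3 * (1 + t ^ 2 / 2 + 5 * t ^ 4 / 96) := by
        gcongr; exact cosh_le_of_abs_le_one (abs_le.2 ⟨by linarith, ht1⟩)
    _ < (t + t ^ 3 / 6) ^ 3 := by nlinarith [pow_pos ht 7, pow_pos ht 9]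
    _ ≤ sinh t ^ 3 := by gcongr; exact self_add_cube_div_six_le_sinh ht.le

lemma exp_neg_div_one_sub_exp_neg_sq (x : ℝ) :
    exp (-x) / (1 - exp (-x)) ^ 2 = 1 / (2 * sinh (x / 2)) ^ 2 := by
  have hx : exp (-x) = (exp (x / 2) ^ 2)⁻¹ := by rw [← exp_nat_mul, ← exp_neg]; ring_nf
  rw [sinh_eq, hx, exp_neg]
  have := exp_pos (x / 2)
  field_simp

noncomputable def invSqSubCschSq (x : ℝ) : ℝ := 1 / x ^ 2 - 1 / (2 * sinh (x / 2)) ^ 2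

lemma invSqSubCschSq_one :
    invSqSubCschSq 1 = (exp 1 ^ 2 - 3 * exp 1 + 1) / (exp 1 ^ 2 - 2 * exp 1 + 1) := by
  have : exp 1 - 1 ≠ 0 := by linarith [one_lt_exp_iff.2 one_pos]
  rw [invSqSubCschSq, ← exp_neg_div_one_sub_exp_neg_sq, exp_neg,
    show exp 1 ^ 2 - 2 * exp 1 + 1 = (exp 1 - 1) ^ 2 by ring]
  field_simp
  ring

lemma one_div_twelve_sub_sq_lt_invSqSubCschSq {x : ℝ} (hx : 0 < x) :
    1 / 12 - x ^ 2 < invSqSubCschSq x := by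
  obtain ⟨t, ht, rfl⟩ : ∃ t, 0 < t ∧ x = 2 * t := ⟨x / 2, by positivity, by ring⟩
  have hcsch : 1 / (2 * sinh t) ^ 2 ≤ 1 / (2 * (t + t ^ 3 / 6)) ^ 2 := by
    gcongr; exact self_add_cube_div_six_le_sinh ht.le
  have hrational : 1 / 12 - (2 * t) ^ 2 < 1 / (2 * t) ^ 2 - 1 / (2 * (t + t ^ 3 / 6)) ^ 2 := by
    rw [← sub_pos]
    field_simp
    ring_nf
    positivity
  rw [invSqSubCschSq, mul_div_cancel_left₀ t two_ne_zero]
  linarith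

lemma hasDerivAt_invSqSubCschSq {x : ℝ} (hx : x ≠ 0) :
    HasDerivAt invSqSubCschSq (cosh (x / 2) / (4 * sinh (x / 2) ^ 3) - 2 / x ^ 3) x := by
  have hs : sinh (x / 2) ≠ 0 := by simpa using hx
  have h1 := (hasDerivAt_const x (1 : ℝ)).div (hasDerivAt_pow 2 x) (pow_ne_zero 2 hx)
  have h2 := (hasDerivAt_const x (1 : ℝ)).div
    ((((hasDerivAt_id x).div_const 2).sinh.const_mul 2).fun_pow 2)
    (pow_ne_zero 2 (mul_ne_zero two_ne_zero hs))
  refine (h1.sub h2).congr_deriv ?_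
  simp only [id]
  field_simp
  ring

lemma continuousOn_invSqSubCschSq : ContinuousOn invSqSubCschSq (Ioi 0) :=
  fun _ hx => (hasDerivAt_invSqSubCschSq (ne_of_gt hx)).continuousAt.continuousWithinAt

lemma strictAntiOn_invSqSubCschSq : StrictAntiOn invSqSubCschSq (Ioc 0 2) := by
  refine strictAntiOn_of_deriv_neg (convex_Ioc 0 2)
    (continuousOn_invSqSubCschSq.mono Ioc_subset_Ioi_self) fun x hx => ?_
  rw [interior_Ioc] at hx
  have hx0 : 0 < x := hx.1
  have ht : 0 < x / 2 := by positivity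
  have hs : 0 < sinh (x / 2) := sinh_pos_iff.2 ht
  rw [(hasDerivAt_invSqSubCschSq hx.1.ne').deriv, sub_neg,
    div_lt_div_iff₀ (by positivity) (by positivity)]
  have := cube_mul_cosh_lt_sinh_cube ht (by linarith [hx.2])
  nlinarith

lemma StrictAntiOn.existsUnique_crossing {f : ℝ → ℝ} {a b c p : ℝ}
    (hf : StrictAntiOn f (Ioc a b)) (hcont : ContinuousOn f (Ioc a b))
    (hc : c ∈ Ioo a b) (hfc : p < f c) (hfb : f b < p) :
    ∃! x₀, x₀ ∈ Ioo a b ∧ f x₀ = p ∧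
      (∀ x ∈ Ioo a x₀, f x > p) ∧ (∀ x ∈ Ioo x₀ b, f x < p) := by
  obtain ⟨x₀, hx₀, hfx₀⟩ := intermediate_value_Ioo' hc.2.le
    (hcont.mono (Icc_subset_Ioc hc.1 le_rfl)) ⟨hfb, hfc⟩
  have hx₀ab : x₀ ∈ Ioc a b := ⟨hc.1.trans hx₀.1, hx₀.2.le⟩
  refine ⟨x₀, ⟨⟨hx₀ab.1, hx₀.2⟩, hfx₀, fun x hx => ?_, fun x hx => ?_⟩, ?_⟩
  · exact hfx₀ ▸ hf ⟨hx.1, hx.2.le.trans hx₀ab.2⟩ hx₀ab hx.2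
  · exact hfx₀ ▸ hf hx₀ab ⟨hx₀ab.1.trans hx.1, hx.2.le⟩ hx.1
  · rintro y ⟨hy, hfy, -, -⟩
    exact hf.injOn (Ioo_subset_Ioc_self hy) hx₀ab (hfy.trans hfx₀.symm)

theorem stmt15 (p : ℝ)
    (hA : (Real.exp 1 ^ 2 - 3 * Real.exp 1 + 1) / (Real.exp 1 ^ 2 - 2 * Real.exp 1 + 1) < p)
    (hB : p < 1 / 12) :
    ∃! x₀ : ℝ, x₀ ∈ Set.Ioo (0 : ℝ) 1 ∧
      (1 / x₀ ^ 2 - Real.exp (-x₀) / (1 - Real.exp (-x₀)) ^ 2 = p ∧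
       (∀ x ∈ Set.Ioo (0 : ℝ) x₀, 1 / x ^ 2 - Real.exp (-x) / (1 - Real.exp (-x)) ^ 2 > p) ∧
       (∀ x ∈ Set.Ioo x₀ (1 : ℝ), 1 / x ^ 2 - Real.exp (-x) / (1 - Real.exp (-x)) ^ 2 < p)) := by
  simp only [exp_neg_div_one_sub_exp_neg_sq]
  set c := min (1 / 2) (1 / 12 - p)
  have hc : c ∈ Ioo 0 1 := ⟨lt_min (by norm_num) (by linarith), by simp [c]; norm_num⟩
  have hfc : p < invSqSubCschSq c := by
    have hc2 : c ^ 2 ≤ 1 / 12 - p := by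
      nlinarith [min_le_left (1 / 2 : ℝ) (1 / 12 - p), min_le_right (1 / 2 : ℝ) (1 / 12 - p), hc.1]
    linarith [one_div_twelve_sub_sq_lt_invSqSubCschSq hc.1]
  exact (strictAntiOn_invSqSubCschSq.mono (Ioc_subset_Ioc_right one_le_two)).existsUnique_crossing
    (continuousOn_invSqSubCschSq.mono Ioc_subset_Ioi_self) hc hfc (invSqSubCschSq_one ▸ hA)
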